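/- Let n ≥ 1 and let m be a positive integer divisible by every prime q ≤ n. Suppose r is a positive integer such that (r/n!)·∏_{j=1}^{n}(m·j+t) ∈ ℤ for all t ∈ ℤ. Then n! ≤ r. -/

import Mathlib

/-- If every prime `q ≤ n` divides `m`, and `(r/n!)·∏_{j=1}^n (m·j + t)` is an integer
for all integers `t`, then `n! ≤ r` (for `r > 0`). -/
theorem stmt1 (n m r : ℕ) (hn : 1 ≤ n) (hm : 0 < m) (hr : 0 < r)
    (hdvd : ∀ q : ℕ, q.Prime → q ≤ n → q ∣ m)
    (hint : ∀ t : ℤ, (Nat.factorial n : ℤ) ∣ (r : ℤ) * ∏ j ∈ Finset.Icc 1 n, ((m : ℤ) * (j : ℤ) + t)) :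
    Nat.factorial n ≤ r := by
  set Q : ℕ := ∏ j ∈ Finset.Icc 1 n, (m * j + 1) with hQ
  have hQcast : (Q : ℤ) = ∏ j ∈ Finset.Icc 1 n, ((m : ℤ) * (j : ℤ) + 1) := by
    push_cast [hQ]; rfl
  have hco : Nat.Coprime (Nat.factorial n) Q := by
    rw [Nat.coprime_iff_gcd_eq_one]
    by_contra h
    set g := Nat.gcd (Nat.factorial n) Q with hg
    have hp : (g.minFac).Prime := Nat.minFac_prime h
    have hpf : g.minFac ∣ Nat.factorial n := (Nat.minFac_dvd g).trans (Nat.gcd_dvd_left _ _)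
    have hpn : g.minFac ≤ n := (Nat.Prime.dvd_factorial hp).mp hpf
    have hpm : g.minFac ∣ m := hdvd _ hp hpn
    have hpQ : g.minFac ∣ Q := (Nat.minFac_dvd g).trans (Nat.gcd_dvd_right _ _)
    haveI : Fact (g.minFac).Prime := ⟨hp⟩
    have h0 : ((Q : ZMod g.minFac)) = 0 := (ZMod.natCast_eq_zero_iff _ _).mpr hpQ
    have h1 : ((Q : ZMod g.minFac)) = 1 := by
      rw [hQ]
      push_cast
      rw [Finset.prod_eq_one]
      intro j hj
      have hm0 : ((m : ZMod g.minFac)) = 0 := (ZMod.natCast_eq_zero_iff _ _).mpr hpm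
      rw [hm0, zero_mul, zero_add]
    rw [h0] at h1
    exact zero_ne_one h1
  have h1 : (Nat.factorial n : ℤ) ∣ ((r * Q : ℕ) : ℤ) := by
    push_cast
    rw [hQcast]
    exact hint 1
  have h2 : Nat.factorial n ∣ r * Q := Int.ofNat_dvd.mp h1
  exact Nat.le_of_dvd hr (hco.dvd_of_dvd_mul_right h2)
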